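/- Let $n \geq 2$, $R_0 > 0$, $p \in (1, n)$, $q = np/(n-p)$, $\delta \in (0,1)$, and let $v:\mathbb{R}^n \to [0,\infty)$ be measurable with $v \in L^p \cap L^q$, satisfying the pointwise bound $v(\xi) \leq \min\{1, (8R_0/|\xi|)^{n/p - 1}\}$ for all $\xi$, and $\int_{\mathbb{R}^n} v^q\,d\xi \leq 2$. Then $\int_{\mathbb{R}^n} |\xi|^{\delta p} v(\xi)^q\,d\xi \leq 2^{1-\delta}(8R_0)^{\delta p}\big(\int_{\mathbb{R}^n} v^p\,d\xi\big)^{\delta}$. -/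

import Mathlib

/-!
Since `(n/p - 1)(q - p) = p`, the decay bound `v ≤ (8R₀/|ξ|)^(n/p - 1)` says exactly that the
weight `|ξ|^p v^(q-p)` is at most `(8R₀)^p`. Writing
`|ξ|^(δp) v^q = (|ξ|^p v^(q-p))^δ · (v^q)^(1-δ) · (v^p)^δ`, the claim follows from this weight
bound and Hölder's inequality `∫ f^(1-δ) g^δ ≤ (∫ f)^(1-δ) (∫ g)^δ`.
-/

open MeasureTheory

lemma sobolev_conjugate_exponent_identity {n p : ℝ} (hp : 0 < p) (hpn : p < n) :
    (n / p - 1) * (n * p / (n - p) - p) = p := by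
  have : n - p ≠ 0 := by linarith
  field_simp
  ring

lemma le_sobolev_conjugate_exponent {n p : ℝ} (hp : 0 ≤ p) (hpn : p < n) :
    p ≤ n * p / (n - p) := by
  rw [le_div_iff₀ (by linarith)]
  nlinarith

lemma rpow_mul_rpow_le_of_le_div_rpow {ρ y R s t : ℝ} (hρ : 0 ≤ ρ) (hy : 0 ≤ y) (hR : 0 ≤ R)
    (ht : 0 ≤ t) (hst : 0 < s * t) (hyR : ρ ≠ 0 → y ≤ (R / ρ) ^ s) :
    ρ ^ (s * t) * y ^ t ≤ R ^ (s * t) := by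
  rcases hρ.eq_or_lt with rfl | hρ
  · rw [Real.zero_rpow hst.ne', zero_mul]
    positivity
  have hyt : y ^ t ≤ R ^ (s * t) / ρ ^ (s * t) := by
    calc y ^ t ≤ ((R / ρ) ^ s) ^ t := Real.rpow_le_rpow hy (hyR hρ.ne') ht
      _ = R ^ (s * t) / ρ ^ (s * t) := by
        rw [← Real.rpow_mul (by positivity), Real.div_rpow hR hρ.le]
  calc ρ ^ (s * t) * y ^ t ≤ ρ ^ (s * t) * (R ^ (s * t) / ρ ^ (s * t)) := by gcongr
    _ = R ^ (s * t) := by field_simp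

lemma rpow_mul_rpow_eq_interpolation {ρ y p q δ : ℝ} (hρ : 0 ≤ ρ) (hy : 0 ≤ y) (hp : 0 ≤ p)
    (hpq : p ≤ q) (hδ : 0 ≤ δ) (hδ1 : δ ≤ 1) :
    ρ ^ (δ * p) * y ^ q = (ρ ^ p * y ^ (q - p)) ^ δ * ((y ^ q) ^ (1 - δ) * (y ^ p) ^ δ) := by
  have hyq : y ^ q = y ^ ((q - p) * δ) * (y ^ (q * (1 - δ)) * y ^ (p * δ)) := by
    rw [← Real.rpow_add_of_nonneg hy (by nlinarith) (by nlinarith),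
      ← Real.rpow_add_of_nonneg hy (by nlinarith) (by nlinarith)]
    ring_nf
  rw [Real.mul_rpow (by positivity) (by positivity), ← Real.rpow_mul hρ, ← Real.rpow_mul hy,
    ← Real.rpow_mul hy, ← Real.rpow_mul hy, hyq]
  ring_nf

theorem lintegral_rpow_mul_rpow_le_of_weight_le {α : Type*} [MeasurableSpace α] (μ : Measure α)
    {ρ v : α → ℝ} (hv : Measurable v) (hρ : ∀ x, 0 ≤ ρ x) (hv0 : ∀ x, 0 ≤ v x) {K p q δ : ℝ}
    (hp : 0 ≤ p) (hpq : p ≤ q) (hδ : 0 ≤ δ) (hδ1 : δ ≤ 1)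
    (hweight : ∀ x, ρ x ^ p * v x ^ (q - p) ≤ K) :
    ∫⁻ x, ENNReal.ofReal (ρ x ^ (δ * p) * v x ^ q) ∂μ ≤
      ENNReal.ofReal (K ^ δ) * ((∫⁻ x, ENNReal.ofReal (v x ^ q) ∂μ) ^ (1 - δ) *
        (∫⁻ x, ENNReal.ofReal (v x ^ p) ∂μ) ^ δ) := by
  have hpointwise : ∀ x, ENNReal.ofReal (ρ x ^ (δ * p) * v x ^ q) ≤
      ENNReal.ofReal (K ^ δ) *
        (ENNReal.ofReal (v x ^ q) ^ (1 - δ) * ENNReal.ofReal (v x ^ p) ^ δ) := by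
    intro x
    have hρx := hρ x
    have hv0x := hv0 x
    have hw : (ρ x ^ p * v x ^ (q - p)) ^ δ ≤ K ^ δ :=
      Real.rpow_le_rpow (by positivity) (hweight x) hδ
    rw [ENNReal.ofReal_rpow_of_nonneg (by positivity) (by linarith),
      ENNReal.ofReal_rpow_of_nonneg (by positivity) hδ, ← ENNReal.ofReal_mul (by positivity),
      ← ENNReal.ofReal_mul ((Real.rpow_nonneg (by positivity) _).trans hw),
      rpow_mul_rpow_eq_interpolation hρx hv0x hp hpq hδ hδ1]
    gcongr
  have hmeas : ∀ r : ℝ, 0 ≤ r → AEMeasurable (fun x => ENNReal.ofReal (v x ^ r)) μ :=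
    fun r hr => ((Real.continuous_rpow_const hr).measurable.comp hv).ennreal_ofReal.aemeasurable
  calc ∫⁻ x, ENNReal.ofReal (ρ x ^ (δ * p) * v x ^ q) ∂μ
      ≤ ∫⁻ x, ENNReal.ofReal (K ^ δ) *
          (ENNReal.ofReal (v x ^ q) ^ (1 - δ) * ENNReal.ofReal (v x ^ p) ^ δ) ∂μ :=
        lintegral_mono hpointwise
    _ = ENNReal.ofReal (K ^ δ) *
          ∫⁻ x, ENNReal.ofReal (v x ^ q) ^ (1 - δ) * ENNReal.ofReal (v x ^ p) ^ δ ∂μ :=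
        lintegral_const_mul' _ _ ENNReal.ofReal_ne_top
    _ ≤ _ := by
      gcongr
      exact ENNReal.lintegral_mul_norm_pow_le (hmeas q (hp.trans hpq)) (hmeas p hp)
        (by linarith) hδ (by ring)

theorem stmt11_general (n : ℕ) (R0 p q δ : ℝ) (hR0 : 0 < R0) (hp : 1 < p) (hpn : p < n)
    (hq : q = n * p / (n - p)) (hδ : 0 < δ) (hδ1 : δ < 1)
    (v : EuclideanSpace ℝ (Fin n) → ℝ) (hv : Measurable v) (hvpos : ∀ ξ, 0 ≤ v ξ)
    (hLp : Integrable (fun ξ => v ξ ^ p)) (hLq : Integrable (fun ξ => v ξ ^ q))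
    (hbound : ∀ ξ : EuclideanSpace ℝ (Fin n), ξ ≠ 0 →
      v ξ ≤ min 1 ((8 * R0 / ‖ξ‖) ^ ((n : ℝ)/p - 1)))
    (hq2 : ∫ ξ, v ξ ^ q ≤ 2) :
    ∫⁻ ξ, ENNReal.ofReal (‖ξ‖ ^ (δ * p) * v ξ ^ q) ≤
      ENNReal.ofReal (2 ^ (1 - δ) * (8 * R0) ^ (δ * p) * (∫ ξ, v ξ ^ p) ^ δ) := by
  have hp0 : 0 < p := by linarith
  have hexp : ((n : ℝ) / p - 1) * (q - p) = p := hq ▸ sobolev_conjugate_exponent_identity hp0 hpn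
  have hpq : p ≤ q := hq ▸ le_sobolev_conjugate_exponent hp0.le hpn
  have hweight : ∀ ξ : EuclideanSpace ℝ (Fin n), ‖ξ‖ ^ p * v ξ ^ (q - p) ≤ (8 * R0) ^ p := by
    intro ξ
    have := rpow_mul_rpow_le_of_le_div_rpow (norm_nonneg ξ) (hvpos ξ) (by linarith)
      (sub_nonneg.mpr hpq) (hexp.symm ▸ hp0) fun hξ => (hbound ξ (norm_ne_zero_iff.mp hξ)).trans
        (min_le_right _ _)
    rwa [hexp] at this
  have hlintegral (r : ℝ) (hr : Integrable (fun ξ => v ξ ^ r)) :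
      ∫⁻ ξ, ENNReal.ofReal (v ξ ^ r) = ENNReal.ofReal (∫ ξ, v ξ ^ r) :=
    (ofReal_integral_eq_lintegral_ofReal hr (ae_of_all _ fun ξ => Real.rpow_nonneg (hvpos ξ) _)).symm
  have hIp : 0 ≤ ∫ ξ, v ξ ^ p := integral_nonneg fun ξ => Real.rpow_nonneg (hvpos ξ) _
  calc _ ≤ _ := lintegral_rpow_mul_rpow_le_of_weight_le volume hv (fun ξ => norm_nonneg ξ) hvpos
        hp0.le hpq hδ.le hδ1.le hweight
    _ ≤ ENNReal.ofReal (((8 * R0) ^ p) ^ δ) *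
          (ENNReal.ofReal 2 ^ (1 - δ) * ENNReal.ofReal (∫ ξ, v ξ ^ p) ^ δ) := by
      rw [hlintegral q hLq, hlintegral p hLp]
      gcongr
    _ = _ := by
      rw [ENNReal.ofReal_rpow_of_nonneg zero_le_two (by linarith),
        ENNReal.ofReal_rpow_of_nonneg hIp hδ.le, ← ENNReal.ofReal_mul (by positivity),
        ← ENNReal.ofReal_mul (by positivity), ← Real.rpow_mul (by linarith), mul_comm p δ]
      ring_nf

theorem stmt11 (n : ℕ) (hn : 2 ≤ n) (R0 p q δ : ℝ) (hR0 : 0 < R0) (hp : 1 < p) (hpn : p < n)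
    (hq : q = n * p / (n - p)) (hδ : 0 < δ) (hδ1 : δ < 1)
    (v : EuclideanSpace ℝ (Fin n) → ℝ) (hv : Measurable v) (hvpos : ∀ ξ, 0 ≤ v ξ)
    (hLp : Integrable (fun ξ => v ξ ^ p)) (hLq : Integrable (fun ξ => v ξ ^ q))
    (hbound0 : ∀ ξ, v ξ ≤ 1)
    (hbound : ∀ ξ : EuclideanSpace ℝ (Fin n), ξ ≠ 0 →
      v ξ ≤ min 1 ((8 * R0 / ‖ξ‖) ^ ((n : ℝ)/p - 1)))
    (hq2 : ∫ ξ, v ξ ^ q ≤ 2) :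
    ∫⁻ ξ, ENNReal.ofReal (‖ξ‖ ^ (δ * p) * v ξ ^ q) ≤
      ENNReal.ofReal (2 ^ (1 - δ) * (8 * R0) ^ (δ * p) * (∫ ξ, v ξ ^ p) ^ δ) :=
  stmt11_general n R0 p q δ hR0 hp hpn hq hδ hδ1 v hv hvpos hLp hLq hbound hq2
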